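/- The average difference Δ(s,c) = (μλ/(μ+λ)) · (θc + (1-θ)s)/(μc + λs + cs) satisfies 0 ≤ Δ(s,c) ≤ max(θλ/(μ+λ), (1-θ)μ/(μ+λ)) for all s, c ≥ 0 with (s,c) ≠ (0,0). -/

import Mathlib

/-! Writing the numerator as `(θ/μ)·(μc) + ((1-θ)/λ)·(λs)`, it is at most
`max (θ/μ) ((1-θ)/λ) · (μc + λs)`, and the denominator only adds `cs ≥ 0`.
Multiplying by `μλ/(μ+λ)` turns `θ/μ` and `(1-θ)/λ` into the two entries of the maximum. -/

lemma add_mul_le_max_mul {α : Type*} [Semiring α] [LinearOrder α] [IsOrderedRing α]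
    {a b x y : α} (hx : 0 ≤ x) (hy : 0 ≤ y) : a * x + b * y ≤ max a b * (x + y) := by
  rw [mul_add]
  gcongr
  exacts [le_max_left a b, le_max_right a b]

lemma weighted_div_le_max {p q u v s c : ℝ} (hu : 0 < u) (hv : 0 < v) (hp : 0 ≤ p)
    (hs : 0 ≤ s) (hc : 0 ≤ c) :
    (p * c + q * s) / (u * c + v * s + c * s) ≤ max (p / u) (q / v) := by
  apply div_le_of_le_mul₀ (by positivity) (le_max_of_le_left (by positivity))
  calc p * c + q * s = p / u * (u * c) + q / v * (v * s) := by field_simp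
    _ ≤ max (p / u) (q / v) * (u * c + v * s) := add_mul_le_max_mul (by positivity) (by positivity)
    _ ≤ max (p / u) (q / v) * (u * c + v * s + c * s) :=
      mul_le_mul_of_nonneg_left (le_add_of_nonneg_right (mul_nonneg hc hs))
        (le_max_of_le_left (by positivity))

theorem stmt_14 (lam mu theta : ℝ) (hlam : 0 < lam) (hmu : 0 < mu)
    (htheta0 : 0 ≤ theta) (htheta1 : theta ≤ 1) :
    ∀ s c : ℝ, 0 ≤ s → 0 ≤ c → (s, c) ≠ (0, 0) →
      0 ≤ (mu * lam / (mu + lam)) * ((theta * c + (1 - theta) * s) / (mu * c + lam * s + c * s)) ∧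
      (mu * lam / (mu + lam)) * ((theta * c + (1 - theta) * s) / (mu * c + lam * s + c * s)) ≤
        max (theta * lam / (mu + lam)) ((1 - theta) * mu / (mu + lam)) := by
  intro s c hs hc _
  have hK : 0 ≤ mu * lam / (mu + lam) := by positivity
  have hnum : 0 ≤ theta * c + (1 - theta) * s :=
    add_nonneg (mul_nonneg htheta0 hc) (mul_nonneg (sub_nonneg.2 htheta1) hs)
  refine ⟨mul_nonneg hK (div_nonneg hnum (by positivity)), ?_⟩
  calc (mu * lam / (mu + lam)) * ((theta * c + (1 - theta) * s) / (mu * c + lam * s + c * s))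
      ≤ (mu * lam / (mu + lam)) * max (theta / mu) ((1 - theta) / lam) :=
        mul_le_mul_of_nonneg_left (weighted_div_le_max hmu hlam htheta0 hs hc) hK
    _ = max (mu * lam / (mu + lam) * (theta / mu)) (mu * lam / (mu + lam) * ((1 - theta) / lam)) :=
        mul_max_of_nonneg _ _ hK
    _ = max (theta * lam / (mu + lam)) ((1 - theta) * mu / (mu + lam)) := by
        congr 1 <;> field_simp
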